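/- Consider the two-player ISG with player 1's services s_1, s_2, s_3 having rewards 1, 1, 1 and edges (s_1, s_2), (s_2, s_3), and player 2's services w_1 (reward 1), w_2 (reward 100), w_3 (reward 100), with cross edges (s_1, w_1), (s_2, w_2), (s_2, w_3) (transitively closed). Then the conflict-free schedule π^A = (π_1 = (s_1, s_2, s_3), π_2 = (w_1, w_2, w_3)) has welfare 309, while the schedule π^B = (π_1 = (s_1, s_2, s_3), π_2 = (w_2, w_3, w_1)) has welfare 407 and is not conflict-free (service w_2 is deployed at time 1 but activates at time 2). Hence a conflict-free schedule exists but no welfare-maximizing schedule is conflict-free is witnessed: the best conflict-free welfare is strictly less than the maximum welfare. -/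

import Mathlib

open scoped Classical
noncomputable section

/-- The (1-based) time slot at which service `v` is deployed. -/
def slot {k q : ℕ} (σ : Fin k → Equiv.Perm (Fin q)) (v : Fin k × Fin q) : ℕ :=
  (σ v.1 v.2 : ℕ) + 1

/-- Activation time of `v`: latest deployment among `v` and its in-neighbors. -/
def act {k q : ℕ} (E : Fin k × Fin q → Fin k × Fin q → Prop)
    (σ : Fin k → Equiv.Perm (Fin q)) (v : Fin k × Fin q) : ℕ :=
  (insert v (Finset.univ.filter fun w => E w v)).sup (slot σ)

/-- Player `i`'s utility under rewards `r`. -/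
def utilR {k q : ℕ} (E : Fin k × Fin q → Fin k × Fin q → Prop)
    (r : Fin k × Fin q → ℝ) (σ : Fin k → Equiv.Perm (Fin q)) (i : Fin k) : ℝ :=
  ∑ j : Fin q, r (i, j) * ((q + 1 - act E σ (i, j) : ℕ) : ℝ)

/-- Utilitarian social welfare. -/
def welfareR {k q : ℕ} (E : Fin k × Fin q → Fin k × Fin q → Prop)
    (r : Fin k × Fin q → ℝ) (σ : Fin k → Equiv.Perm (Fin q)) : ℝ :=
  ∑ i : Fin k, utilR E r σ i

/-- Pure Nash equilibrium: no unilateral deviation improves a player's utility. -/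
def PNER {k q : ℕ} (E : Fin k × Fin q → Fin k × Fin q → Prop)
    (r : Fin k × Fin q → ℝ) (σ : Fin k → Equiv.Perm (Fin q)) : Prop :=
  ∀ (i : Fin k) (τ : Equiv.Perm (Fin q)),
    utilR E r (Function.update σ i τ) i ≤ utilR E r σ i

/-- A schedule is conflict-free if every service activates upon deployment. -/
def conflictFree {k q : ℕ} (E : Fin k × Fin q → Fin k × Fin q → Prop)
    (σ : Fin k → Equiv.Perm (Fin q)) : Prop :=
  ∀ v : Fin k × Fin q, act E σ v = slot σ v

/-- Base edges: (s₁,s₂), (s₂,s₃), (s₁,w₁), (s₂,w₂), (s₂,w₃). -/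
def base18 : Fin 2 × Fin 3 → Fin 2 × Fin 3 → Prop := fun v w =>
  (v, w) ∈ ([((0, 0), (0, 1)), ((0, 1), (0, 2)), ((0, 0), (1, 0)),
             ((0, 1), (1, 1)), ((0, 1), (1, 2))] :
      List ((Fin 2 × Fin 3) × (Fin 2 × Fin 3)))

/-- The dependency relation: transitive closure of the base edges. -/
def E18 : Fin 2 × Fin 3 → Fin 2 × Fin 3 → Prop := Relation.TransGen base18

/-- Rewards: player 1: 1, 1, 1; player 2: 1, 100, 100. -/
def r18 : Fin 2 × Fin 3 → ℝ := fun v => ![![1, 1, 1], ![1, 100, 100]] v.1 v.2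

/-- Schedule π^A: player 1 plays (s₁,s₂,s₃), player 2 plays (w₁,w₂,w₃). -/
def σ18A : Fin 2 → Equiv.Perm (Fin 3) := fun _ => 1

/-- Schedule π^B: player 1 plays (s₁,s₂,s₃), player 2 plays (w₂,w₃,w₁). -/
def σ18B : Fin 2 → Equiv.Perm (Fin 3) := ![1, (finRotate 3)⁻¹]

/-!
Conflict-freeness says exactly that deployment times increase along every dependency, and for a
transitive closure it suffices to check the base edges. So in a conflict-free schedule player 1
deploys s₁, s₂, s₃ in order, w₂ and w₃ both come after s₂, hence w₁ comes first and one of the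
heavy services w₂, w₃ activates only at time 3: every conflict-free schedule earns exactly 309.
Under π^B, w₂ is deployed early and waits for s₂, so both heavy services activate at time 2.
-/

open Finset

section Schedule

variable {k q : ℕ} {E : Fin k × Fin q → Fin k × Fin q → Prop} {σ : Fin k → Equiv.Perm (Fin q)}

theorem slot_le_act (v : Fin k × Fin q) : slot σ v ≤ act E σ v :=
  le_sup (mem_insert_self _ _)

theorem slot_le_act_of_rel {w v : Fin k × Fin q} (h : E w v) : slot σ w ≤ act E σ v :=
  le_sup (mem_insert_of_mem (by simpa using h))

theorem act_le_iff {v : Fin k × Fin q} {m : ℕ} :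
    act E σ v ≤ m ↔ slot σ v ≤ m ∧ ∀ w, E w v → slot σ w ≤ m := by
  simp [act]

theorem conflictFree_iff : conflictFree E σ ↔ ∀ w v, E w v → slot σ w ≤ slot σ v := by
  refine ⟨fun h w v hwv => h v ▸ slot_le_act_of_rel hwv, fun h v => ?_⟩
  exact le_antisymm (act_le_iff.2 ⟨le_rfl, fun w hw => h w v hw⟩) (slot_le_act v)

theorem conflictFree_transGen_iff {r : Fin k × Fin q → Fin k × Fin q → Prop} :
    conflictFree (Relation.TransGen r) σ ↔ ∀ w v, r w v → slot σ w ≤ slot σ v := by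
  refine conflictFree_iff.trans ⟨fun h w v hwv => h w v (.single hwv), fun h w v hwv => ?_⟩
  induction hwv with
  | single hwv => exact h _ _ hwv
  | tail _ huv ih => exact ih.trans (h _ _ huv)

theorem welfareR_eq_of_conflictFree (r : Fin k × Fin q → ℝ) (h : conflictFree E σ) :
    welfareR E r σ = ∑ i, ∑ j, r (i, j) * ((q : ℝ) - σ i j) := by
  refine sum_congr rfl fun i _ => sum_congr rfl fun j _ => ?_
  rw [h, slot, Nat.add_sub_add_right, Nat.cast_sub (σ i j).is_le']

end Schedule

instance : DecidableRel base18 := fun _ _ => by unfold base18; infer_instance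

theorem conflictFree_σ18A : conflictFree E18 σ18A := by
  rw [E18, conflictFree_transGen_iff]
  show ∀ w v, base18 w v → (w.2 : ℕ) + 1 ≤ v.2 + 1
  decide

theorem eq_of_conflictFree_E18 {σ : Fin 2 → Equiv.Perm (Fin 3)} (h : conflictFree E18 σ) :
    σ 0 = 1 ∧ σ 1 0 = 0 := by
  rw [E18, conflictFree_transGen_iff] at h
  have hs : ∀ w v, base18 w v → σ w.1 w.2 ≤ σ v.1 v.2 := fun w v hwv => by
    simpa [slot] using h w v hwv
  have h0 : σ 0 = 1 := by
    have hmono : Monotone (σ 0) := Fin.monotone_iff_le_succ.2 fun j => by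
      fin_cases j
      exacts [hs (0, 0) (0, 1) (by decide), hs (0, 1) (0, 2) (by decide)]
    exact Equiv.ext fun j => (hmono.strictMono_of_injective (σ 0).injective).apply_eq
  refine ⟨h0, ?_⟩
  have h01 : σ 0 1 = 1 := by rw [h0]; rfl
  obtain ⟨j, hj⟩ := (σ 1).surjective 0
  fin_cases j
  · exact hj
  · exact absurd (hj ▸ h01 ▸ hs (0, 1) (1, 1) (by decide)) (by decide)
  · exact absurd (hj ▸ h01 ▸ hs (0, 1) (1, 2) (by decide)) (by decide)

theorem welfareR_eq_of_conflictFree_E18 {σ : Fin 2 → Equiv.Perm (Fin 3)}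
    (h : conflictFree E18 σ) : welfareR E18 r18 σ = 309 := by
  obtain ⟨h0, h10⟩ := eq_of_conflictFree_E18 h
  have hsum : ((σ 1 1 : ℕ) : ℝ) + (σ 1 2 : ℕ) = 3 := by
    have := Equiv.sum_comp (σ 1) fun j => ((j : ℕ) : ℝ)
    simp [Fin.sum_univ_three, h10] at this
    linarith
  rw [welfareR_eq_of_conflictFree r18 h]
  simp only [Fin.sum_univ_two, Fin.sum_univ_three, h0, h10, r18]
  norm_num [Matrix.cons_val_two, Matrix.tail_cons]
  linarith

def dep18 (w v : Fin 2 × Fin 3) : Prop :=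
  w = (0, 0) ∧ v ≠ (0, 0) ∨ w = (0, 1) ∧ v ∈ [(0, 2), (1, 1), (1, 2)]

instance : DecidableRel dep18 := fun _ _ => by unfold dep18; infer_instance

instance : IsTrans _ dep18 := ⟨by decide⟩

theorem E18_iff {w v : Fin 2 × Fin 3} : E18 w v ↔ dep18 w v := by
  refine ⟨fun h => Relation.transGen_minimal (fun w v hwv => ?_) w v h, fun h => ?_⟩
  · revert w v; decide
  · obtain hwv | ⟨hw, hv⟩ : base18 w v ∨ base18 w (0, 1) ∧ base18 (0, 1) v := by
      revert w v; decide
    exacts [.single hwv, .tail (.single hw) hv]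

theorem act_E18 (σ : Fin 2 → Equiv.Perm (Fin 3)) (v : Fin 2 × Fin 3) :
    act E18 σ v = (insert v (univ.filter (dep18 · v))).sup (slot σ) := by
  unfold act
  congr 2
  ext w
  simp [E18_iff]

theorem slot_σ18B : slot σ18B = fun v => ![![1, 2, 3], ![3, 1, 2]] v.1 v.2 := by
  funext v; fin_cases v <;> rfl

theorem act_σ18B : ∀ v, act E18 σ18B v = ![![1, 2, 3], ![3, 2, 2]] v.1 v.2 := by
  simp only [act_E18, slot_σ18B]
  decide

theorem welfareR_σ18B : welfareR E18 r18 σ18B = 407 := by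
  simp only [welfareR, utilR, Fin.sum_univ_two, Fin.sum_univ_three, act_σ18B]
  norm_num [r18, Matrix.cons_val_two, Matrix.tail_cons]

theorem stmt_18 :
    welfareR E18 r18 σ18A = 309 ∧ conflictFree E18 σ18A ∧
    welfareR E18 r18 σ18B = 407 ∧
    -- w₂ is deployed at time 1 but activates at time 2, so π^B is not conflict-free
    slot σ18B (1, 1) = 1 ∧ act E18 σ18B (1, 1) = 2 ∧ ¬ conflictFree E18 σ18B ∧
    -- every conflict-free schedule has welfare strictly below the maximum
    (∀ σ : Fin 2 → Equiv.Perm (Fin 3), conflictFree E18 σ →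
      welfareR E18 r18 σ < welfareR E18 r18 σ18B) := by
  have hslot : slot σ18B (1, 1) = 1 := congrFun slot_σ18B (1, 1)
  have hact : act E18 σ18B (1, 1) = 2 := act_σ18B (1, 1)
  refine ⟨welfareR_eq_of_conflictFree_E18 conflictFree_σ18A, conflictFree_σ18A, welfareR_σ18B,
    hslot, hact, fun h => absurd (hact ▸ hslot ▸ h (1, 1)) (by decide), fun σ hσ => ?_⟩
  rw [welfareR_eq_of_conflictFree_E18 hσ, welfareR_σ18B]
  norm_num
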